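/- arXiv:0905.2463 — 4 statements merged into one kernel-verified Lean document; each statement's English description precedes it below -/
import Mathlib

section
/- Let c ∈ ℝ^d and write g_ℓ = g(‖(c − I_ℓ)/h‖²) and S = Σ_{ℓ=1}^n w_ℓ g_ℓ. If S ≠ 0, then ∇f(c) = 0 if and only if c is a fixed point of the mean shift iteration, i.e. c = (Σ_{ℓ=1}^n w_ℓ g_ℓ I_ℓ) / S. -/
/-!
By the chain rule, `∇f(c) = -(2/h²) Σ_ℓ w_ℓ g_ℓ (c - I_ℓ) = -(2/h²) (S c - Σ_ℓ w_ℓ g_ℓ I_ℓ)`,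
which vanishes exactly when `S c = Σ_ℓ w_ℓ g_ℓ I_ℓ`, i.e. when `c` is fixed by the mean shift.
-/

open InnerProductSpace

section KernelScore

variable {E : Type*} [NormedAddCommGroup E] [InnerProductSpace ℝ E]

theorem hasFDerivAt_comp_norm_sq_smul_sub {k : ℝ → ℝ} {a : ℝ} {p x : E}
    (hk : DifferentiableAt ℝ k (‖a • (x - p)‖ ^ 2)) :
    HasFDerivAt (fun y => k (‖a • (y - p)‖ ^ 2))
      (innerSL ℝ ((2 * a ^ 2 * deriv k (‖a • (x - p)‖ ^ 2)) • (x - p))) x := by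
  have hscaled : HasFDerivAt (fun y => a • (y - p)) (a • ContinuousLinearMap.id ℝ E) x :=
    ((hasFDerivAt_id x).sub_const p).const_smul a
  refine (hk.hasDerivAt.comp_hasFDerivAt x hscaled.norm_sq).congr_fderiv ?_
  ext y
  simp only [map_smul, map_sub, ContinuousLinearMap.comp_smulₛₗ, Real.ringHom_apply,
    ContinuousLinearMap.comp_id, smul_apply, sub_apply, coe_innerSL_apply, smul_eq_mul,
    nsmul_eq_mul, Nat.cast_ofNat]
  ring

theorem hasGradientAt_sum_mul_comp_norm_sq_smul_sub [CompleteSpace E] {ι : Type*} (s : Finset ι)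
    (w : ι → ℝ) (p : ι → E) {k : ℝ → ℝ} {a : ℝ} {x : E}
    (hk : ∀ i ∈ s, DifferentiableAt ℝ k (‖a • (x - p i)‖ ^ 2)) :
    HasGradientAt (fun y => ∑ i ∈ s, w i * k (‖a • (y - p i)‖ ^ 2))
      (∑ i ∈ s, (w i * (2 * a ^ 2 * deriv k (‖a • (x - p i)‖ ^ 2))) • (x - p i)) x := by
  rw [hasGradientAt_iff_hasFDerivAt]
  refine (HasFDerivAt.fun_sum fun i hi =>
    (hasFDerivAt_comp_norm_sq_smul_sub (hk i hi)).const_mul (w i)).congr_fderiv ?_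
  ext y
  simp [mul_assoc]

end KernelScore

theorem Finset.sum_smul_sub {ι R M : Type*} [Ring R] [AddCommGroup M] [Module R M]
    (s : Finset ι) (r : ι → R) (x : M) (p : ι → M) :
    ∑ i ∈ s, r i • (x - p i) = (∑ i ∈ s, r i) • x - ∑ i ∈ s, r i • p i := by
  simp only [smul_sub, Finset.sum_sub_distrib, Finset.sum_smul]

/-- A point `c` with nonzero total weight `S = Σ_ℓ w_ℓ g_ℓ` is a stationary
point of the weighted kernel score `f` iff it is a fixed point of the mean
shift iteration `c ↦ (Σ_ℓ w_ℓ g_ℓ I_ℓ) / S`. -/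
theorem gradient_zero_iff_meanshift_fixed_point
    (d n : ℕ) (I : Fin n → EuclideanSpace ℝ (Fin d)) (w : Fin n → ℝ)
    (h : ℝ) (hh : 0 < h) (k : ℝ → ℝ) (hk : Differentiable ℝ k)
    (g : ℝ → ℝ) (hg : g = fun t => -deriv k t)
    (f : EuclideanSpace ℝ (Fin d) → ℝ)
    (hf : f = fun c => ∑ ℓ : Fin n, w ℓ * k (‖h⁻¹ • (c - I ℓ)‖ ^ 2))
    (c : EuclideanSpace ℝ (Fin d))
    (gl : Fin n → ℝ) (hgl : gl = fun ℓ => g (‖h⁻¹ • (c - I ℓ)‖ ^ 2))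
    (S : ℝ) (hS : S = ∑ ℓ : Fin n, w ℓ * gl ℓ) (hS0 : S ≠ 0) :
    gradient f c = 0
      ↔ c = S⁻¹ • ∑ ℓ : Fin n, (w ℓ * gl ℓ) • I ℓ := by
  have hgrad : gradient f c = (-(2 * h⁻¹ ^ 2)) • (S • c - ∑ ℓ, (w ℓ * gl ℓ) • I ℓ) := by
    rw [hf, (hasGradientAt_sum_mul_comp_norm_sq_smul_sub _ w I fun ℓ _ => hk _).gradient,
      hS, ← Finset.sum_smul_sub, Finset.smul_sum]
    refine Finset.sum_congr rfl fun ℓ _ => ?_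
    simp only [hgl, hg, smul_smul]
    ring_nf
  have hscale : -(2 * h⁻¹ ^ 2) ≠ 0 := neg_ne_zero.mpr (by positivity)
  rw [hgrad, smul_eq_zero_iff_right hscale, sub_eq_zero, eq_inv_smul_iff₀ hS0]
end

section
/- Let c ∈ ℝ^d and write g_ℓ = g(‖(c − I_ℓ)/h‖²), S = Σ_{ℓ=1}^n w_ℓ g_ℓ and S_abs = Σ_{ℓ=1}^n |w_ℓ g_ℓ|. Suppose S_abs ≠ 0 and c is a fixed point of Collins' modified mean shift iteration, i.e. c = (Σ_ℓ w_ℓ g_ℓ I_ℓ) / S_abs, and suppose moreover that c is a stationary point of f, i.e. Σ_ℓ w_ℓ g_ℓ (I_ℓ − c) = 0. Then (S_abs − S) · c = 0; in particular, if some term w_ℓ g_ℓ is strictly negative (so that S < S_abs), then c = 0. Hence, whenever a fixed point of the modified iteration has some strictly negative term w_ℓ g_ℓ and is nonzero, it is not a stationary point of f, so the modified mean shift with negative weights need not converge to a local extremum of f. -/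
/-- A fixed point of Collins' modified mean shift iteration
`c ↦ (Σ_ℓ w_ℓ g_ℓ I_ℓ) / (Σ_ℓ |w_ℓ g_ℓ|)` that is also a stationary point of
the weighted kernel score must satisfy `(S_abs − S) • c = 0`; in particular,
if some term `w_ℓ g_ℓ` is strictly negative then `c = 0`.  Hence with negative
weights the modified mean shift need not converge to a local extremum. -/
theorem collins_modified_meanshift_fixed_point
    (d n : ℕ) (I : Fin n → EuclideanSpace ℝ (Fin d)) (w : Fin n → ℝ)
    (h : ℝ) (hh : 0 < h) (k : ℝ → ℝ) (hk : Differentiable ℝ k)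
    (g : ℝ → ℝ) (hg : g = fun t => -deriv k t)
    (c : EuclideanSpace ℝ (Fin d))
    (gl : Fin n → ℝ) (hgl : gl = fun ℓ => g (‖h⁻¹ • (c - I ℓ)‖ ^ 2))
    (S Sabs : ℝ)
    (hS : S = ∑ ℓ : Fin n, w ℓ * gl ℓ)
    (hSabs : Sabs = ∑ ℓ : Fin n, |w ℓ * gl ℓ|)
    (hSabs0 : Sabs ≠ 0)
    (hfix : c = Sabs⁻¹ • ∑ ℓ : Fin n, (w ℓ * gl ℓ) • I ℓ)
    (hstat : ∑ ℓ : Fin n, (w ℓ * gl ℓ) • (I ℓ - c) = 0) :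
    (Sabs - S) • c = 0 ∧ ((∃ ℓ : Fin n, w ℓ * gl ℓ < 0) → c = 0) := by

  have hsum : ∑ ℓ : Fin n, (w ℓ * gl ℓ) • I ℓ = S • c := by
    have := hstat
    simp only [smul_sub] at this
    rw [Finset.sum_sub_distrib, sub_eq_zero] at this
    rw [this, hS, ← Finset.sum_smul]
  have hSabsC : Sabs • c = S • c := by
    conv_lhs => rw [hfix]
    rw [smul_smul, mul_inv_cancel₀ hSabs0, one_smul, hsum]
  have key : (Sabs - S) • c = 0 := by
    rw [sub_smul, hSabsC, sub_self]
  refine ⟨key, fun ⟨ℓ, hℓ⟩ => ?_⟩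
  have hlt : S < Sabs := by
    rw [hS, hSabs]
    apply Finset.sum_lt_sum
    · intro i _; exact le_abs_self _
    · exact ⟨ℓ, Finset.mem_univ ℓ, by rw [abs_of_neg hℓ]; linarith⟩
  have hne : Sabs - S ≠ 0 := sub_ne_zero_of_ne (ne_of_gt hlt)
  exact (smul_eq_zero.mp key).resolve_left hne
end

section
/- Assume additionally that the profile k : ℝ → ℝ is convex and that all weights w_ℓ are nonnegative. Let c ∈ ℝ^d, write g_ℓ = g(‖(c − I_ℓ)/h‖²) and S = Σ_{ℓ=1}^n w_ℓ g_ℓ, assume S > 0, and let c′ = (Σ_ℓ w_ℓ g_ℓ I_ℓ)/S be the mean shift update of c. Then f(c′) − f(c) ≥ (S/h²) · ‖c′ − c‖² ≥ 0; in particular the weighted kernel score is nondecreasing along mean shift iterations with nonnegative weights. -/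
open RealInnerProductSpace

/-- Tangent line inequality for a convex differentiable function on ℝ. -/
lemma tangent_le_aux {k : ℝ → ℝ} (hk : Differentiable ℝ k)
    (hkc : ConvexOn ℝ Set.univ k) (a b : ℝ) :
    deriv k a * (b - a) ≤ k b - k a := by
  rcases lt_trichotomy a b with hab | hab | hab
  · have hs := hkc.deriv_le_slope (Set.mem_univ a) (Set.mem_univ b) hab (hk a)
    rw [slope_def_field] at hs
    have := (le_div_iff₀ (sub_pos.2 hab)).mp hs
    linarith
  · subst hab; simp
  · have hs := hkc.slope_le_deriv (Set.mem_univ b) (Set.mem_univ a) hab (hk a)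
    rw [slope_def_field] at hs
    have := (div_le_iff₀ (sub_pos.2 hab)).mp hs
    have h2 : deriv k a * (b - a) = -(deriv k a * (a - b)) := by ring
    linarith

/-- With a convex profile `k` and nonnegative weights, the weighted kernel
score is nondecreasing along mean shift iterations:
`f(c′) − f(c) ≥ (S/h²)‖c′ − c‖² ≥ 0` for the mean shift update `c′` of `c`. -/
theorem meanshift_monotone_ascent
    (d n : ℕ) (I : Fin n → EuclideanSpace ℝ (Fin d)) (w : Fin n → ℝ)
    (hw : ∀ ℓ, 0 ≤ w ℓ)
    (h : ℝ) (hh : 0 < h) (k : ℝ → ℝ) (hk : Differentiable ℝ k)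
    (hkconv : ConvexOn ℝ Set.univ k)
    (g : ℝ → ℝ) (hg : g = fun t => -deriv k t)
    (f : EuclideanSpace ℝ (Fin d) → ℝ)
    (hf : f = fun c => ∑ ℓ : Fin n, w ℓ * k (‖h⁻¹ • (c - I ℓ)‖ ^ 2))
    (c : EuclideanSpace ℝ (Fin d))
    (gl : Fin n → ℝ) (hgl : gl = fun ℓ => g (‖h⁻¹ • (c - I ℓ)‖ ^ 2))
    (S : ℝ) (hS : S = ∑ ℓ : Fin n, w ℓ * gl ℓ) (hSpos : 0 < S)
    (c' : EuclideanSpace ℝ (Fin d))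
    (hc' : c' = S⁻¹ • ∑ ℓ : Fin n, (w ℓ * gl ℓ) • I ℓ) :
    f c' - f c ≥ (S / h ^ 2) * ‖c' - c‖ ^ 2
      ∧ (S / h ^ 2) * ‖c' - c‖ ^ 2 ≥ 0 := by
  have hS0 : S ≠ 0 := ne_of_gt hSpos
  set a : Fin n → ℝ := fun ℓ => ‖h⁻¹ • (c - I ℓ)‖ ^ 2 with ha
  set b : Fin n → ℝ := fun ℓ => ‖h⁻¹ • (c' - I ℓ)‖ ^ 2 with hb
  -- weighted tangent inequality
  have hterm : ∀ ℓ, w ℓ * gl ℓ * (a ℓ - b ℓ) ≤ w ℓ * k (b ℓ) - w ℓ * k (a ℓ) := by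
    intro ℓ
    have ht := tangent_le_aux hk hkconv (a ℓ) (b ℓ)
    have hgl' : gl ℓ = -deriv k (a ℓ) := by rw [hgl, hg]
    have hwl := hw ℓ
    calc w ℓ * gl ℓ * (a ℓ - b ℓ)
        = w ℓ * (deriv k (a ℓ) * (b ℓ - a ℓ)) := by rw [hgl']; ring
      _ ≤ w ℓ * (k (b ℓ) - k (a ℓ)) := mul_le_mul_of_nonneg_left ht hwl
      _ = w ℓ * k (b ℓ) - w ℓ * k (a ℓ) := mul_sub _ _ _
  have hsum : ∑ ℓ : Fin n, w ℓ * gl ℓ * (a ℓ - b ℓ) ≤ f c' - f c := by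
    rw [hf]
    simp only [← Finset.sum_sub_distrib]
    exact Finset.sum_le_sum fun ℓ _ => hterm ℓ
  -- the sum over the mean-shift update
  have hP : (∑ ℓ : Fin n, (w ℓ * gl ℓ) • I ℓ) = S • c' := by
    rw [hc', smul_smul, mul_inv_cancel₀ hS0, one_smul]
  have hinner : ∀ x : EuclideanSpace ℝ (Fin d),
      ∑ ℓ : Fin n, w ℓ * gl ℓ * ⟪x, I ℓ⟫ = S * ⟪x, c'⟫ := by
    intro x
    have : ⟪x, ∑ ℓ : Fin n, (w ℓ * gl ℓ) • I ℓ⟫ = ∑ ℓ : Fin n, w ℓ * gl ℓ * ⟪x, I ℓ⟫ := by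
      rw [inner_sum]
      exact Finset.sum_congr rfl fun ℓ _ => real_inner_smul_right _ _ _
    rw [← this, hP, real_inner_smul_right]
  -- norm of scaled vector
  have hns : ∀ v : EuclideanSpace ℝ (Fin d), ‖h⁻¹ • v‖ ^ 2 = (h ^ 2)⁻¹ * ‖v‖ ^ 2 := by
    intro v
    rw [norm_smul, Real.norm_eq_abs, abs_of_pos (inv_pos.2 hh)]
    field_simp
  have hab : ∀ ℓ, a ℓ - b ℓ
      = (h ^ 2)⁻¹ * (‖c‖ ^ 2 - ‖c'‖ ^ 2 - 2 * ⟪c, I ℓ⟫ + 2 * ⟪c', I ℓ⟫) := by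
    intro ℓ
    have e1 : ‖c - I ℓ‖ ^ 2 = ‖c‖ ^ 2 - 2 * ⟪c, I ℓ⟫ + ‖I ℓ‖ ^ 2 := norm_sub_sq_real c (I ℓ)
    have e2 : ‖c' - I ℓ‖ ^ 2 = ‖c'‖ ^ 2 - 2 * ⟪c', I ℓ⟫ + ‖I ℓ‖ ^ 2 := norm_sub_sq_real c' (I ℓ)
    simp only [ha, hb, hns]
    rw [e1, e2]; ring
  have hcalc : ∑ ℓ : Fin n, w ℓ * gl ℓ * (a ℓ - b ℓ) = (S / h ^ 2) * ‖c' - c‖ ^ 2 := by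
    have expand : ∀ ℓ ∈ Finset.univ, w ℓ * gl ℓ * (a ℓ - b ℓ)
        = (h ^ 2)⁻¹ * ((‖c‖ ^ 2 - ‖c'‖ ^ 2) * (w ℓ * gl ℓ)
            - 2 * (w ℓ * gl ℓ * ⟪c, I ℓ⟫) + 2 * (w ℓ * gl ℓ * ⟪c', I ℓ⟫)) := by
      intro ℓ _
      rw [hab ℓ]; ring
    rw [Finset.sum_congr rfl expand, ← Finset.mul_sum]
    rw [Finset.sum_add_distrib, Finset.sum_sub_distrib, ← Finset.mul_sum, ← Finset.mul_sum,
      ← Finset.mul_sum, hinner, hinner, ← hS]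
    have hcc' : ⟪c', c'⟫ = ‖c'‖ ^ 2 := real_inner_self_eq_norm_sq c' 
    have hnrm : ‖c' - c‖ ^ 2 = ‖c'‖ ^ 2 - 2 * ⟪c, c'⟫ + ‖c‖ ^ 2 := by
      rw [norm_sub_sq_real, real_inner_comm]
    rw [hcc', hnrm]
    field_simp
    ring
  constructor
  · rw [← hcalc]; exact hsum
  · positivity
end

section
/- Let ϑ : {1, …, n} → {1, …, m} be a bin-assignment map, let k₁, …, k_n be real numbers (spatial kernel values at pixels), let λ ∈ ℝ, and define the candidate histogram p ∈ ℝ^m by p_u = λ Σ_{ℓ : ϑ(ℓ) = u} k_ℓ. Let p⁰ ∈ ℝ^m have strictly positive entries, let q_1, …, q_{N_S} ∈ ℝ^m have nonnegative entries, and let β₁, …, β_{N_S} ∈ ℝ. Define per-pixel weights ŵ_ℓ = Σ_{i=1}^{N_S} β_i √(q_{i, ϑ(ℓ)} / p⁰_{ϑ(ℓ)}). Then Σ_{i=1}^{N_S} β_i Σ_{u=1}^m p_u √(q_{i,u} / p⁰_u) = λ Σ_{ℓ=1}^n ŵ_ℓ k_ℓ. In particular, the linearized SVM classification score has exactly the form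 of a weighted kernel density estimate, the same format as the standard mean shift tracking cost. -/
/-- The linearized SVM classification score over a kernel-weighted candidate
histogram has exactly the form of a weighted kernel density estimate:
`Σᵢ βᵢ Σ_u p_u √(q_{i,u}/p⁰_u) = λ Σ_ℓ ŵ_ℓ k_ℓ`, where
`p_u = λ Σ_{ℓ : ϑ(ℓ)=u} k_ℓ` and
`ŵ_ℓ = Σᵢ βᵢ √(q_{i,ϑ(ℓ)}/p⁰_{ϑ(ℓ)})`. -/
theorem svm_score_is_weighted_kde
    (n m NS : ℕ) (ϑ : Fin n → Fin m) (kval : Fin n → ℝ) (lam : ℝ)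
    (p : Fin m → ℝ)
    (hpdef : p = fun u => lam * ∑ ℓ : Fin n, if ϑ ℓ = u then kval ℓ else 0)
    (p0 : Fin m → ℝ) (hp0 : ∀ u, 0 < p0 u)
    (q : Fin NS → Fin m → ℝ) (hq : ∀ i u, 0 ≤ q i u)
    (β : Fin NS → ℝ)
    (what : Fin n → ℝ)
    (hwhat : what = fun ℓ => ∑ i : Fin NS, β i * Real.sqrt (q i (ϑ ℓ) / p0 (ϑ ℓ))) :
    ∑ i : Fin NS, β i * ∑ u : Fin m, p u * Real.sqrt (q i u / p0 u)
      = lam * ∑ ℓ : Fin n, what ℓ * kval ℓ := by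
  subst hpdef hwhat
  have key : ∀ f : Fin m → ℝ,
      (∑ u : Fin m, (∑ ℓ : Fin n, if ϑ ℓ = u then kval ℓ else 0) * f u)
        = ∑ ℓ : Fin n, f (ϑ ℓ) * kval ℓ := by
    intro f
    simp only [Finset.sum_mul, ite_mul, zero_mul]
    rw [Finset.sum_comm]
    refine Finset.sum_congr rfl fun ℓ _ => ?_
    rw [Finset.sum_ite_eq Finset.univ (ϑ ℓ)]
    simp [mul_comm]
  simp only [mul_assoc, ← Finset.mul_sum, key]
  simp only [Finset.mul_sum, Finset.sum_mul]
  rw [Finset.sum_comm]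
  exact Finset.sum_congr rfl fun ℓ _ => Finset.sum_congr rfl fun i _ => by ring
end
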